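/- Let x,y ∈ ℝ^d with x ≠ y, let f be a 1-field with dom(f) = {x,y}, M := Γ¹(f;{x,y}) > 0, and let c ∈ B̄_{1/2}(x,y) be the point given by the biponctual structure lemma (c = (x+y)/2 + s(D_xf − D_yf)/(2M) for the appropriate s ∈ {−1,1}). Then any two minimal extensions W and W′ of f whose domains contain the segments [x,c] and [c,y] satisfy W(a) = W′(a) for every a ∈ [x,c] ∪ [c,y]. -/

import Mathlib

open scoped ENNReal RealInnerProductSpace
open Metric Set

/-- A 1-field assigns to each point `x` the pair `(f_x, D_xf)` representing the affine
polynomial `a ↦ f_x + ⟪D_xf, a - x⟫`; `eval1 f x a` is the evaluation `f(x)(a)`. -/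
noncomputable def eval1 {d : ℕ} (f : EuclideanSpace ℝ (Fin d) → ℝ × EuclideanSpace ℝ (Fin d))
    (x a : EuclideanSpace ℝ (Fin d)) : ℝ :=
  (f x).1 + ⟪(f x).2, a - x⟫

/-- `Γ¹(f;x,y) = 2 sup_a |f(x)(a) - f(y)(a)| / (‖x-a‖² + ‖y-a‖²)`. -/
noncomputable def gamma1 {d : ℕ} (f : EuclideanSpace ℝ (Fin d) → ℝ × EuclideanSpace ℝ (Fin d))
    (x y : EuclideanSpace ℝ (Fin d)) : ℝ :=
  2 * ⨆ a : EuclideanSpace ℝ (Fin d),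
    |eval1 f x a - eval1 f y a| / (‖x - a‖ ^ 2 + ‖y - a‖ ^ 2)

/-- `Γ¹(f;D) = sup {Γ¹(f;x,y) : x,y ∈ D, x ≠ y}`, valued in `[0,∞]`. -/
noncomputable def gamma1On {d : ℕ} (f : EuclideanSpace ℝ (Fin d) → ℝ × EuclideanSpace ℝ (Fin d))
    (D : Set (EuclideanSpace ℝ (Fin d))) : ℝ≥0∞ :=
  ⨆ x ∈ D, ⨆ y ∈ D, ⨆ (_ : x ≠ y), ENNReal.ofReal (gamma1 f x y)

/-- `A(f;x,y) = (2(f_x - f_y) + ⟪D_xf + D_yf, y - x⟫) / ‖x-y‖²`. -/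
noncomputable def Afun {d : ℕ} (f : EuclideanSpace ℝ (Fin d) → ℝ × EuclideanSpace ℝ (Fin d))
    (x y : EuclideanSpace ℝ (Fin d)) : ℝ :=
  (2 * ((f x).1 - (f y).1) + ⟪(f x).2 + (f y).2, y - x⟫) / ‖x - y‖ ^ 2

set_option maxHeartbeats 1000000

namespace MinExtAux

variable {d : ℕ}

lemma denom_pos {p q b : EuclideanSpace ℝ (Fin d)} (hpq : p ≠ q) :
    0 < ‖p - b‖ ^ 2 + ‖q - b‖ ^ 2 := by
  by_contra h
  push_neg at h
  have h1 : (0:ℝ) ≤ ‖p - b‖ ^ 2 := sq_nonneg _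
  have h2 : (0:ℝ) ≤ ‖q - b‖ ^ 2 := sq_nonneg _
  have hp : ‖p - b‖ ^ 2 = 0 := by linarith
  have hq : ‖q - b‖ ^ 2 = 0 := by linarith
  have hp' : p = b := by
    have := pow_eq_zero_iff (n := 2) (by norm_num) |>.mp hp
    have := norm_eq_zero.mp this
    exact sub_eq_zero.mp this
  have hq' : q = b := by
    have := pow_eq_zero_iff (n := 2) (by norm_num) |>.mp hq
    have := norm_eq_zero.mp this
    exact sub_eq_zero.mp this
  exact hpq (hp'.trans hq'.symm)

lemma bdd_ratio (W : EuclideanSpace ℝ (Fin d) → ℝ × EuclideanSpace ℝ (Fin d))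
    (p q : EuclideanSpace ℝ (Fin d)) (hpq : p ≠ q) :
    BddAbove (Set.range fun b : EuclideanSpace ℝ (Fin d) =>
      |eval1 W p b - eval1 W q b| / (‖p - b‖ ^ 2 + ‖q - b‖ ^ 2)) := by
  set α : ℝ := (W p).1 - (W q).1 - ⟪(W q).2, p - q⟫ with hα
  set v := (W p).2 - (W q).2 with hv
  set δ : ℝ := ‖p - q‖ ^ 2 / 2 with hδ
  have hδpos : 0 < δ := by
    have : p - q ≠ 0 := sub_ne_zero.mpr hpq
    have := norm_pos_iff.mpr this
    positivity
  have hsq : Real.sqrt δ ^ 2 = δ := Real.sq_sqrt hδpos.le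
  have hsqpos : 0 < Real.sqrt δ := Real.sqrt_pos.mpr hδpos
  refine ⟨2 * |α| / δ + ‖v‖ / Real.sqrt δ, ?_⟩
  rintro _ ⟨b, rfl⟩
  have hden : 0 < ‖p - b‖ ^ 2 + ‖q - b‖ ^ 2 := denom_pos hpq
  rw [div_le_iff₀ hden]
  have hnum : eval1 W p b - eval1 W q b = α + ⟪v, b - p⟫ := by
    simp only [eval1, hα, hv, inner_sub_left, inner_sub_right]
    ring
  have h1 : |eval1 W p b - eval1 W q b| ≤ |α| + ‖v‖ * ‖b - p‖ := by
    rw [hnum]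
    calc |α + ⟪v, b - p⟫| ≤ |α| + |⟪v, b - p⟫| := abs_add_le _ _
      _ ≤ |α| + ‖v‖ * ‖b - p‖ := by
          have := abs_real_inner_le_norm v (b - p)
          linarith
  have h2 : δ ≤ ‖p - b‖ ^ 2 + ‖q - b‖ ^ 2 := by
    have ht : ‖p - q‖ ≤ ‖p - b‖ + ‖q - b‖ := by
      calc ‖p - q‖ = ‖(p - b) - (q - b)‖ := by rw [sub_sub_sub_cancel_right]
        _ ≤ ‖p - b‖ + ‖q - b‖ := norm_sub_le _ _
    have h0'' : (0:ℝ) ≤ ‖p - q‖ := norm_nonneg _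
    rw [hδ]
    nlinarith [sq_nonneg (‖p - b‖ - ‖q - b‖), norm_nonneg (p - b), norm_nonneg (q - b)]
  have h3 : ‖b - p‖ ^ 2 ≤ ‖p - b‖ ^ 2 + ‖q - b‖ ^ 2 := by
    rw [norm_sub_rev b p]
    nlinarith [sq_nonneg ‖q - b‖]
  have hr : (0:ℝ) ≤ ‖b - p‖ := norm_nonneg _
  have hvn : (0:ℝ) ≤ ‖v‖ := norm_nonneg _
  have han : (0:ℝ) ≤ |α| := abs_nonneg _
  have h23 : 0 ≤ 2 * (‖p - b‖ ^ 2 + ‖q - b‖ ^ 2) - δ - ‖b - p‖ ^ 2 := by linarith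
  have hC : 0 ≤ δ + ‖b - p‖ ^ 2 - 2 * Real.sqrt δ * ‖b - p‖ := by
    nlinarith [sq_nonneg (Real.sqrt δ - ‖b - p‖)]
  calc |eval1 W p b - eval1 W q b| ≤ |α| + ‖v‖ * ‖b - p‖ := h1
    _ ≤ (2 * |α| / δ + ‖v‖ / Real.sqrt δ) * (‖p - b‖ ^ 2 + ‖q - b‖ ^ 2) := by
        rw [div_add_div _ _ (ne_of_gt hδpos) (ne_of_gt hsqpos), div_mul_eq_mul_div,
          le_div_iff₀ (by positivity)]
        nlinarith [mul_nonneg (mul_nonneg han hsqpos.le) (sub_nonneg.2 h2),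
          mul_nonneg (mul_nonneg hvn hδpos.le) h23,
          mul_nonneg (mul_nonneg hvn hδpos.le) hC,
          mul_nonneg (mul_nonneg han hsqpos.le) hden.le]

lemma gamma_pointwise (W : EuclideanSpace ℝ (Fin d) → ℝ × EuclideanSpace ℝ (Fin d))
    (D : Set (EuclideanSpace ℝ (Fin d))) (M : ℝ) (hM : 0 < M)
    (hmin : gamma1On W D = ENNReal.ofReal M) {p q : EuclideanSpace ℝ (Fin d)}
    (hp : p ∈ D) (hq : q ∈ D) (hpq : p ≠ q) :
    ∀ b, 2 * |eval1 W p b - eval1 W q b| ≤ M * (‖p - b‖ ^ 2 + ‖q - b‖ ^ 2) := by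
  have hle : ENNReal.ofReal (gamma1 W p q) ≤ gamma1On W D := by
    calc ENNReal.ofReal (gamma1 W p q)
        ≤ ⨆ (_ : p ≠ q), ENNReal.ofReal (gamma1 W p q) := le_iSup_of_le hpq le_rfl
      _ ≤ ⨆ y ∈ D, ⨆ (_ : p ≠ y), ENNReal.ofReal (gamma1 W p y) := le_iSup₂_of_le q hq le_rfl
      _ ≤ gamma1On W D := le_iSup₂_of_le p hp le_rfl
  rw [hmin] at hle
  have hg : gamma1 W p q ≤ M := by
    by_contra h
    push_neg at h
    exact absurd hle (not_le.mpr (ENNReal.ofReal_lt_ofReal_iff_of_nonneg hM.le |>.mpr h))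
  intro b
  have hterm : |eval1 W p b - eval1 W q b| / (‖p - b‖ ^ 2 + ‖q - b‖ ^ 2)
      ≤ ⨆ a, |eval1 W p a - eval1 W q a| / (‖p - a‖ ^ 2 + ‖q - a‖ ^ 2) :=
    le_ciSup (bdd_ratio W p q hpq) b
  have hden := denom_pos (b := b) (p := p) (q := q) hpq
  have h4 : |eval1 W p b - eval1 W q b| / (‖p - b‖ ^ 2 + ‖q - b‖ ^ 2) ≤ M / 2 := by
    rw [gamma1] at hg
    linarith
  have := (div_le_iff₀ hden).mp h4
  linarith

lemma star_identity (x y c : EuclideanSpace ℝ (Fin d))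
    (f : EuclideanSpace ℝ (Fin d) → ℝ × EuclideanSpace ℝ (Fin d)) (M s : ℝ)
    (hMpos : 0 < M) (hxy : x ≠ y)
    (hden : 0 < ‖x - c‖ ^ 2 + ‖y - c‖ ^ 2)
    (hc : c = midpoint ℝ x y + (s / (2 * M)) • ((f x).2 - (f y).2))
    (hcM : M = 2 * s * (eval1 f x c - eval1 f y c) / (‖x - c‖ ^ 2 + ‖y - c‖ ^ 2)) :
    ∀ b, s * (eval1 f x b - eval1 f y b)
      = M / 2 * (‖b - x‖ ^ 2 + ‖b - y‖ ^ 2) - M * ‖b - c‖ ^ 2 := by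
  have hcMc : M * (‖x - c‖ ^ 2 + ‖y - c‖ ^ 2) = 2 * s * (eval1 f x c - eval1 f y c) := by
    rw [eq_div_iff hden.ne'] at hcM
    exact hcM
  have hmid : midpoint ℝ x y = (2:ℝ)⁻¹ • (x + y) := by
    rw [midpoint_eq_smul_add]; norm_num
  have hc2 : (2 * M) • c = M • (x + y) + s • ((f x).2 - (f y).2) := by
    rw [hc, hmid, smul_add, smul_smul, smul_smul]
    have e1 : (2 * M) * (2⁻¹:ℝ) = M := by ring
    have e2 : (2 * M) * (s / (2 * M)) = s := by field_simp
    rw [e1, e2]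
  intro b
  have hinner := congrArg (fun v => (⟪b - c, v⟫ : ℝ)) hc2
  simp only [inner_add_right, inner_sub_right, inner_sub_left, real_inner_smul_right] at hinner
  -- expand everything
  simp only [eval1, inner_sub_right] at hcMc ⊢
  rw [norm_sub_sq_real x c, norm_sub_sq_real y c] at hcMc
  rw [norm_sub_sq_real b x, norm_sub_sq_real b y, norm_sub_sq_real b c]
  linear_combination (-(1:ℝ)/2) * hcMc - hinner +
    s * real_inner_comm b (f x).2 + (-s) * real_inner_comm b (f y).2 +
    (-s) * real_inner_comm c (f x).2 + s * real_inner_comm c (f y).2 +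
    (-M) * real_inner_comm c x + (-M) * real_inner_comm c y +
    (-(2:ℝ)*M) * real_inner_self_eq_norm_sq c

lemma eval1_congr {f W : EuclideanSpace ℝ (Fin d) → ℝ × EuclideanSpace ℝ (Fin d)}
    {x : EuclideanSpace ℝ (Fin d)} (h : W x = f x) (b : EuclideanSpace ℝ (Fin d)) :
    eval1 W x b = eval1 f x b := by simp [eval1, h]

lemma jet_formula (x y c a : EuclideanSpace ℝ (Fin d))
    (f W : EuclideanSpace ℝ (Fin d) → ℝ × EuclideanSpace ℝ (Fin d)) (M s t : ℝ)
    (hMpos : 0 < M) (hs : s = 1 ∨ s = -1)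
    (hstar : ∀ b, s * (eval1 f x b - eval1 f y b)
      = M / 2 * (‖b - x‖ ^ 2 + ‖b - y‖ ^ 2) - M * ‖b - c‖ ^ 2)
    (ht0 : 0 ≤ t) (ht1 : t ≤ 1) (ha : a = (1 - t) • x + t • c)
    (hWx : W x = f x) (hWy : W y = f y)
    (h1 : ∀ b, 2 * |eval1 W x b - eval1 W a b| ≤ M * (‖x - b‖ ^ 2 + ‖a - b‖ ^ 2))
    (h2 : ∀ b, 2 * |eval1 W a b - eval1 W y b| ≤ M * (‖a - b‖ ^ 2 + ‖y - b‖ ^ 2)) :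
    ∀ b, eval1 W a b = eval1 f x b + M / 2 * s * (‖b - a‖ ^ 2 - ‖b - x‖ ^ 2) := by
  have habs : ∀ X : ℝ, s * X ≤ |X| ∧ -|X| ≤ s * X := by
    intro X
    rcases hs with rfl | rfl
    · simpa using ⟨le_abs_self X, neg_abs_le X⟩
    · constructor
      · rw [neg_one_mul]; exact neg_le_abs X
      · rw [neg_one_mul, neg_le_neg_iff]; exact le_abs_self X
  obtain ⟨r0, hr0⟩ : ∃ r : ℝ, s * ((W a).1 - eval1 f x a) + M / 2 * ‖a - x‖ ^ 2 = r := ⟨_, rfl⟩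
  obtain ⟨ρ, hρ⟩ : ∃ ρ' : EuclideanSpace ℝ (Fin d),
      s • ((W a).2 - (f x).2) + M • (a - x) = ρ' := ⟨_, rfl⟩
  -- Step A : affine representation
  have haff : ∀ b, s * (eval1 W a b - eval1 f x b) - M / 2 * (‖b - a‖ ^ 2 - ‖b - x‖ ^ 2)
      = r0 + ⟪ρ, b - a⟫ := by
    intro b
    rw [← hr0, ← hρ]
    simp only [eval1, inner_add_left, inner_sub_left, inner_sub_right,
      real_inner_smul_left]
    rw [norm_sub_sq_real b a, norm_sub_sq_real b x, norm_sub_sq_real a x]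
    linear_combination (-M) * real_inner_comm a b + M * real_inner_comm x b +
      M * real_inner_comm x a + M * real_inner_self_eq_norm_sq a +
      (-2*M) * real_inner_comm b a + (2*M) * real_inner_comm b x
  -- Step B : three pointwise bounds
  have hB1L : ∀ b, -(r0 + ⟪ρ, b - a⟫) ≤ M * ‖b - a‖ ^ 2 := by
    intro b
    have h1b := h1 b
    rw [eval1_congr hWx] at h1b
    have habs' := (habs (eval1 W a b - eval1 f x b)).2
    have : |eval1 W a b - eval1 f x b| = |eval1 f x b - eval1 W a b| := abs_sub_comm _ _
    rw [norm_sub_rev x b, norm_sub_rev a b] at h1b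
    have := haff b
    nlinarith [habs', this, h1b]
  have hB1U : ∀ b, r0 + ⟪ρ, b - a⟫ ≤ M * ‖b - x‖ ^ 2 := by
    intro b
    have h1b := h1 b
    rw [eval1_congr hWx] at h1b
    have habs' := (habs (eval1 W a b - eval1 f x b)).1
    have heq : |eval1 W a b - eval1 f x b| = |eval1 f x b - eval1 W a b| := abs_sub_comm _ _
    rw [norm_sub_rev x b, norm_sub_rev a b] at h1b
    have := haff b
    nlinarith [habs', heq, h1b]
  have hB2U : ∀ b, r0 + ⟪ρ, b - a⟫ ≤ M * ‖b - c‖ ^ 2 := by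
    intro b
    have h2b := h2 b
    rw [eval1_congr hWy] at h2b
    have habs' := (habs (eval1 W a b - eval1 f y b)).1
    rw [norm_sub_rev a b, norm_sub_rev y b] at h2b
    have hst := hstar b
    have := haff b
    nlinarith [habs', h2b, hst]
  -- Step C : r0 = 0 and ρ = 0
  have hP : (0:ℝ) ≤ ⟪ρ, ρ⟫ := real_inner_self_nonneg
  obtain ⟨P, hPdef⟩ : ∃ p : ℝ, (⟪ρ, ρ⟫ : ℝ) = p := ⟨_, rfl⟩
  rw [hPdef] at hP
  have hk : (0:ℝ) < (2 * M)⁻¹ := by positivity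
  have hnormk : ∀ u : EuclideanSpace ℝ (Fin d), ‖(2*M)⁻¹ • ρ‖ ^ 2 = (2*M)⁻¹^2 * P := by
    intro u
    rw [norm_smul, mul_pow, Real.norm_eq_abs, sq_abs, ← hPdef, real_inner_self_eq_norm_sq]
  have hC1 : P / (4 * M) ≤ r0 := by
    have h := hB1L (a - (2*M)⁻¹ • ρ)
    rw [sub_sub_cancel_left] at h
    rw [inner_neg_right, real_inner_smul_right, norm_neg, hnormk ρ, hPdef] at h
    have e1 : M * ((2*M)⁻¹^2 * P) = P / (4*M) := by field_simp; ring
    have e2 : (2*M)⁻¹ * P = P / (2*M) := by ring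
    have e3 : P / (2*M) = P / (4*M) + P / (4*M) := by ring
    linarith [h, e1, e2, e3]
  have hC2 : r0 + ⟪ρ, x - a⟫ + P / (4 * M) ≤ 0 := by
    have h := hB1U (x + (2*M)⁻¹ • ρ)
    rw [add_sub_right_comm, inner_add_right, real_inner_smul_right, add_sub_cancel_left,
      hnormk ρ, hPdef] at h
    have e1 : M * ((2*M)⁻¹^2 * P) = P / (4*M) := by field_simp; ring
    have e2 : (2*M)⁻¹ * P = P / (2*M) := by ring
    have e3 : P / (2*M) = P / (4*M) + P / (4*M) := by ring
    linarith [h, e1, e2, e3]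
  have hC3 : r0 + ⟪ρ, c - a⟫ + P / (4 * M) ≤ 0 := by
    have h := hB2U (c + (2*M)⁻¹ • ρ)
    rw [add_sub_right_comm, inner_add_right, real_inner_smul_right, add_sub_cancel_left,
      hnormk ρ, hPdef] at h
    have e1 : M * ((2*M)⁻¹^2 * P) = P / (4*M) := by field_simp; ring
    have e2 : (2*M)⁻¹ * P = P / (2*M) := by ring
    have e3 : P / (2*M) = P / (4*M) + P / (4*M) := by ring
    linarith [h, e1, e2, e3]
  have hzero : (1 - t) • (x - a) + t • (c - a) = 0 := by
    rw [ha]; module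
  have hinner0 : (1 - t) * ⟪ρ, x - a⟫ + t * ⟪ρ, c - a⟫ = 0 := by
    have h := congrArg (fun v => (⟪ρ, v⟫ : ℝ)) hzero
    simp only [inner_add_right, real_inner_smul_right, inner_zero_right] at h
    linarith
  have hsum : r0 + P / (4 * M) ≤ 0 := by
    obtain ⟨u, hu⟩ : ∃ u : ℝ, (⟪ρ, x - a⟫ : ℝ) = u := ⟨_, rfl⟩
    obtain ⟨v, hv⟩ : ∃ v : ℝ, (⟪ρ, c - a⟫ : ℝ) = v := ⟨_, rfl⟩
    rw [hu] at hC2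
    rw [hv] at hC3
    rw [hu, hv] at hinner0
    have e2 := mul_le_mul_of_nonneg_left hC2 (by linarith : (0:ℝ) ≤ 1 - t)
    have e3 := mul_le_mul_of_nonneg_left hC3 ht0
    have e2' : (1 - t) * (r0 + u + P / (4 * M)) ≤ 0 := by linarith
    have e3' : t * (r0 + v + P / (4 * M)) ≤ 0 := by linarith
    nlinarith [e2', e3', hinner0]
  have hPzero : P = 0 := by
    have h4M : (0:ℝ) < 4 * M := by positivity
    have : P / (4*M) ≤ 0 ∧ 0 ≤ P / (4*M) := ⟨by linarith, by positivity⟩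
    have := le_antisymm this.1 this.2
    field_simp at this
    simpa using this
  have hρzero : ρ = 0 := inner_self_eq_zero.mp (by rw [hPdef, hPzero])
  have hr0zero : r0 = 0 := by
    rw [hPzero] at hC1 hsum
    simp at hC1 hsum
    linarith
  -- Step D : conclude
  intro b
  have := haff b
  rw [hρzero, hr0zero, inner_zero_left, add_zero] at this
  rcases hs with rfl | rfl
  · linarith
  · linarith

lemma eval1_ext {W W' : EuclideanSpace ℝ (Fin d) → ℝ × EuclideanSpace ℝ (Fin d)}
    {a : EuclideanSpace ℝ (Fin d)} (h : ∀ b, eval1 W a b = eval1 W' a b) : W a = W' a := by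
  have h1 : (W a).1 = (W' a).1 := by
    have := h a
    simpa [eval1] using this
  have h2 : (W a).2 = (W' a).2 := by
    have key : ∀ b, (⟪(W a).2 - (W' a).2, b - a⟫ : ℝ) = 0 := by
      intro b
      have hb := h b
      simp only [eval1, inner_sub_left] at hb ⊢
      linarith [hb, h1]
    have := key (a + ((W a).2 - (W' a).2))
    rw [add_sub_cancel_left] at this
    exact sub_eq_zero.mp (inner_self_eq_zero.mp this)
  exact Prod.ext h1 h2

end MinExtAux

/-- All minimal extensions of a biponctual 1-field coincide on the broken segment
`[x,c] ∪ [c,y]`. -/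
theorem minimal_extensions_agree_on_segments {d : ℕ}
    (x y : EuclideanSpace ℝ (Fin d)) (hxy : x ≠ y)
    (f : EuclideanSpace ℝ (Fin d) → ℝ × EuclideanSpace ℝ (Fin d))
    (M s : ℝ) (hM : M = gamma1 f x y) (hMpos : 0 < M) (hs : s = 1 ∨ s = -1)
    (c : EuclideanSpace ℝ (Fin d))
    (hc : c = midpoint ℝ x y + (s / (2 * M)) • ((f x).2 - (f y).2))
    (hcball : c ∈ Metric.closedBall (midpoint ℝ x y) (‖x - y‖ / 2))
    (hcM : M = 2 * s * (eval1 f x c - eval1 f y c) / (‖x - c‖ ^ 2 + ‖y - c‖ ^ 2))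
    (W W' : EuclideanSpace ℝ (Fin d) → ℝ × EuclideanSpace ℝ (Fin d))
    (D D' : Set (EuclideanSpace ℝ (Fin d)))
    (hWx : W x = f x) (hWy : W y = f y)
    (hxyD : {x, y} ⊆ D) (hsegD : segment ℝ x c ∪ segment ℝ c y ⊆ D)
    (hWmin : gamma1On W D = ENNReal.ofReal M)
    (hW'x : W' x = f x) (hW'y : W' y = f y)
    (hxyD' : {x, y} ⊆ D') (hsegD' : segment ℝ x c ∪ segment ℝ c y ⊆ D')
    (hW'min : gamma1On W' D' = ENNReal.ofReal M) :
    ∀ a ∈ segment ℝ x c ∪ segment ℝ c y, W a = W' a := by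
  intro a ha
  have hxD : x ∈ D := hxyD (by simp)
  have hyD : y ∈ D := hxyD (by simp)
  have hxD' : x ∈ D' := hxyD' (by simp)
  have hyD' : y ∈ D' := hxyD' (by simp)
  have hden : 0 < ‖x - c‖ ^ 2 + ‖y - c‖ ^ 2 := MinExtAux.denom_pos hxy
  have hstar := MinExtAux.star_identity x y c f M s hMpos hxy hden hc hcM
  by_cases hax : a = x
  · subst hax; rw [hWx, hW'x]
  by_cases hay : a = y
  · subst hay; rw [hWy, hW'y]
  have haD : a ∈ D := hsegD ha
  have haD' : a ∈ D' := hsegD' ha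
  rcases ha with hseg | hseg
  · -- a ∈ [x, c]
    rw [segment_eq_image] at hseg
    obtain ⟨t, ⟨ht0, ht1⟩, hteq⟩ := hseg
    have ha' : a = (1 - t) • x + t • c := hteq.symm
    have h1 := MinExtAux.gamma_pointwise W D M hMpos hWmin hxD haD (Ne.symm hax)
    have h2 := MinExtAux.gamma_pointwise W D M hMpos hWmin haD hyD hay
    have h1' := MinExtAux.gamma_pointwise W' D' M hMpos hW'min hxD' haD' (Ne.symm hax)
    have h2' := MinExtAux.gamma_pointwise W' D' M hMpos hW'min haD' hyD' hay
    have hWf := MinExtAux.jet_formula x y c a f W M s t hMpos hs hstar ht0 ht1 ha'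
      hWx hWy h1 h2
    have hW'f := MinExtAux.jet_formula x y c a f W' M s t hMpos hs hstar ht0 ht1 ha'
      hW'x hW'y h1' h2'
    exact MinExtAux.eval1_ext (fun b => (hWf b).trans (hW'f b).symm)
  · -- a ∈ [c, y]
    rw [segment_symm, segment_eq_image] at hseg
    obtain ⟨t, ⟨ht0, ht1⟩, hteq⟩ := hseg
    have ha' : a = (1 - t) • y + t • c := hteq.symm
    have hstar' : ∀ b, (-s) * (eval1 f y b - eval1 f x b)
        = M / 2 * (‖b - y‖ ^ 2 + ‖b - x‖ ^ 2) - M * ‖b - c‖ ^ 2 := by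
      intro b
      have := hstar b
      linarith
    have hs' : -s = 1 ∨ -s = -1 := by
      rcases hs with rfl | rfl
      · right; norm_num
      · left; norm_num
    have h1 := MinExtAux.gamma_pointwise W D M hMpos hWmin hyD haD (Ne.symm hay)
    have h2 := MinExtAux.gamma_pointwise W D M hMpos hWmin haD hxD hax
    have h1' := MinExtAux.gamma_pointwise W' D' M hMpos hW'min hyD' haD' (Ne.symm hay)
    have h2' := MinExtAux.gamma_pointwise W' D' M hMpos hW'min haD' hxD' hax
    have hWf := MinExtAux.jet_formula y x c a f W M (-s) t hMpos hs' hstar' ht0 ht1 ha'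
      hWy hWx h1 h2
    have hW'f := MinExtAux.jet_formula y x c a f W' M (-s) t hMpos hs' hstar' ht0 ht1 ha'
      hW'y hW'x h1' h2'
    exact MinExtAux.eval1_ext (fun b => (hWf b).trans (hW'f b).symm)
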